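/- For any two subspaces V, W ∈ Gr₂(n,k), the inner product of the subspace states satisfies ⟨V|W⟩ = 2^{dim(V ∩ W) − k}. -/

import Mathlib

/-! The subspace states are normalized indicator vectors, so `⟨V|W⟩ = 2^{-k} · |V ∩ W|`,
and a subspace of `𝔽₂ⁿ` of dimension `d` has `2^d` elements. -/

open scoped Classical in
/-- The subspace state `|W⟩ = 2^{-k/2} ∑_{u ∈ W} |u⟩` in `(ℂ²)^{⊗n}`, identified with
`EuclideanSpace ℂ (Fin n → ZMod 2)` via the computational basis `{|v⟩ : v ∈ 𝔽₂ⁿ}`. -/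
noncomputable def subspaceState {n : ℕ} (W : Submodule (ZMod 2) (Fin n → ZMod 2)) :
    EuclideanSpace ℂ (Fin n → ZMod 2) :=
  (((Real.sqrt 2 : ℝ) : ℂ) ^ (Module.finrank (ZMod 2) W))⁻¹ •
    ∑ u : W, EuclideanSpace.single (u : Fin n → ZMod 2) (1 : ℂ)

open Finset

theorem EuclideanSpace.inner_sum_single_one {𝕜 ι : Type*} [RCLike 𝕜] [Fintype ι] [DecidableEq ι]
    (s t : Finset ι) :
    inner 𝕜 (∑ i ∈ s, single i (1 : 𝕜)) (∑ j ∈ t, single j (1 : 𝕜)) = #(s ∩ t) := by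
  simp [sum_inner, EuclideanSpace.inner_single_left, WithLp.ofLp_sum, Finset.sum_apply,
    Pi.single_apply]

theorem Submodule.card_filter_mem_eq_pow_finrank {K V : Type*} [Field K] [Fintype K]
    [AddCommGroup V] [Module K V] [Fintype V] (W : Submodule K V) [DecidablePred (· ∈ W)] :
    #{x | x ∈ W} = Fintype.card K ^ Module.finrank K W := by
  rw [← Module.card_eq_pow_finrank (V := W), Fintype.card_subtype]

/-- For `V, W ∈ Gr₂(n,k)`, the inner product of the subspace states is
`⟨V|W⟩ = 2^{dim(V ∩ W) - k}`. -/
theorem inner_subspaceState_subspaceState {n k : ℕ}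
    (V W : Submodule (ZMod 2) (Fin n → ZMod 2))
    (hV : Module.finrank (ZMod 2) V = k) (hW : Module.finrank (ZMod 2) W = k) :
    (inner ℂ (subspaceState V) (subspaceState W) : ℂ) =
      (2 : ℂ) ^ ((Module.finrank (ZMod 2) ↥(V ⊓ W) : ℤ) - (k : ℤ)) := by
  classical
  have hsum (U : Submodule (ZMod 2) (Fin n → ZMod 2)) :
      ∑ u : U, EuclideanSpace.single (u : Fin n → ZMod 2) (1 : ℂ) =
        ∑ x ∈ {x | x ∈ U}, EuclideanSpace.single x 1 := by
    symm; apply sum_subtype; simp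
  have hcard : #(({x | x ∈ V} : Finset (Fin n → ZMod 2)) ∩ ({x | x ∈ W} : Finset _)) =
      2 ^ Module.finrank (ZMod 2) ↥(V ⊓ W) := by
    simpa [← filter_and] using (V ⊓ W).card_filter_mem_eq_pow_finrank
  have hnormSq : (starRingEnd ℂ) ((((√2 : ℝ) : ℂ) ^ k)⁻¹) * (((√2 : ℝ) : ℂ) ^ k)⁻¹ =
      (2 ^ k)⁻¹ := by
    rw [map_inv₀, map_pow, Complex.conj_ofReal, ← mul_inv, ← mul_pow, ← Complex.ofReal_mul,
      Real.mul_self_sqrt zero_le_two, Complex.ofReal_ofNat]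
  rw [subspaceState, subspaceState, hV, hW, inner_smul_left, inner_smul_right, hsum, hsum,
    EuclideanSpace.inner_sum_single_one, hcard, ← mul_assoc, hnormSq, zpow_sub₀ two_ne_zero,
    zpow_natCast, zpow_natCast]
  push_cast
  ring
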